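/- arXiv:1412.3542 — 4 statements merged into one kernel-verified Lean document; each statement's English description precedes it below -/
import Mathlib

section
/- If G is a simple graph such that G is chordal and G has no independent set of size 3, then cone(v,G) is chordal, claw-free, and narrow. -/
/-- The cone over a graph `G`: a new vertex (`none`) joined to every vertex of `G`. -/
def coneGraph {V : Type*} (G : SimpleGraph V) : SimpleGraph (Option V) :=
  SimpleGraph.fromRel (fun a b => (∃ u w, a = some u ∧ b = some w ∧ G.Adj u w) ∨ a = none)

/-- A graph is chordal if it has no induced cycle of length greater than 3. -/
def Chordal {W : Type*} (H : SimpleGraph W) : Prop :=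
  ∀ m : ℕ, 3 < m → ¬ ∃ f : ZMod m → W, Function.Injective f ∧
    ∀ i j : ZMod m, H.Adj (f i) (f j) ↔ (j = i + 1 ∨ i = j + 1)

/-- A graph is claw-free if it has no induced `K_{1,3}`. -/
def ClawFree {W : Type*} (H : SimpleGraph W) : Prop :=
  ¬ ∃ c a b d : W, a ≠ b ∧ a ≠ d ∧ b ≠ d ∧
    H.Adj c a ∧ H.Adj c b ∧ H.Adj c d ∧ ¬ H.Adj a b ∧ ¬ H.Adj a d ∧ ¬ H.Adj b d

/-- A graph is narrow if every vertex is within distance 1 of every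
shortest path realizing the diameter. -/
def Narrow {W : Type*} (H : SimpleGraph W) : Prop :=
  ∀ a b : W, (∀ u w : W, H.dist u w ≤ H.dist a b) →
    ∀ p : H.Walk a b, p.IsPath → p.length = H.dist a b →
      ∀ x : W, ∃ y ∈ p.support, H.dist x y ≤ 1

lemma cone_adj_some {V : Type*} (G : SimpleGraph V) (x y : V) :
    (coneGraph G).Adj (some x) (some y) ↔ G.Adj x y := by
  simp only [coneGraph, SimpleGraph.fromRel_adj]
  constructor
  · rintro ⟨hne, h | h⟩
    · rcases h with ⟨u, w, hu, hw, hadj⟩ | h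
      · simp_all
      · simp at h
    · rcases h with ⟨u, w, hu, hw, hadj⟩ | h
      · exact (by simp_all : G.Adj y x).symm
      · simp at h
  · intro h
    exact ⟨by simpa using h.ne, Or.inl (Or.inl ⟨x, y, rfl, rfl, h⟩)⟩

lemma cone_adj_none {V : Type*} (G : SimpleGraph V) (x : V) :
    (coneGraph G).Adj none (some x) := by
  simp [coneGraph, SimpleGraph.fromRel_adj]

lemma dist_le_one_of_adj {W : Type*} {H : SimpleGraph W} {u v : W} (h : H.Adj u v) :
    H.dist u v ≤ 1 := by
  simpa using SimpleGraph.dist_le (SimpleGraph.Walk.cons h SimpleGraph.Walk.nil)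

/-- If `G` is chordal and has no independent set of size 3, then the cone over `G`
is chordal, claw-free and narrow. -/
theorem cone_chordal_clawFree_narrow {V : Type*} (G : SimpleGraph V)
    (hchord : Chordal G)
    (hind : ¬ ∃ a b d : V, a ≠ b ∧ a ≠ d ∧ b ≠ d ∧
      ¬ G.Adj a b ∧ ¬ G.Adj a d ∧ ¬ G.Adj b d) :
    Chordal (coneGraph G) ∧ ClawFree (coneGraph G) ∧ Narrow (coneGraph G) := by
  refine ⟨?_, ?_, ?_⟩
  · -- Chordal
    rintro m hm ⟨f, hf, hadj⟩
    have key : ∀ s t : ℕ, ((s : ZMod m) = (t : ZMod m)) → s % m = t % m := by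
      intro s t h
      exact (ZMod.natCast_eq_natCast_iff s t m).mp h
    by_cases hnone : ∃ i, f i = none
    · obtain ⟨i, hi⟩ := hnone
      have hji : i + 2 ≠ i := by
        intro h
        have h2 : (2 : ZMod m) = 0 := by
          have := add_left_cancel (show i + 2 = i + 0 by simpa using h)
          exact this
        have h' := key 2 0 (by exact_mod_cast h2)
        rw [Nat.mod_eq_of_lt (by omega), Nat.mod_eq_of_lt (by omega)] at h'
        omega
      have hfj : f (i + 2) ≠ none := fun h => hji (hf (h.trans hi.symm))
      obtain ⟨w, hw⟩ := Option.ne_none_iff_exists'.mp hfj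
      have hAdj : (coneGraph G).Adj (f i) (f (i + 2)) := by
        rw [hi, hw]; exact cone_adj_none G w
      rcases (hadj i (i + 2)).mp hAdj with h | h
      · have h21 : (2 : ZMod m) = 1 := add_left_cancel h
        have h' := key 2 1 (by exact_mod_cast h21)
        rw [Nat.mod_eq_of_lt (by omega), Nat.mod_eq_of_lt (by omega)] at h'
        omega
      · have h03 : (0 : ZMod m) = 3 := by
          have : i + 0 = i + 3 := by
            rw [add_zero]
            calc i = i + 2 + 1 := h
            _ = i + 3 := by ring
          exact add_left_cancel this
        have h' := key 0 3 (by exact_mod_cast h03)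
        rw [Nat.mod_eq_of_lt (by omega), Nat.mod_eq_of_lt (by omega)] at h'
        omega
    · push_neg at hnone
      apply hchord m hm
      have hsome : ∀ i, (f i).isSome := fun i => Option.isSome_iff_ne_none.mpr (hnone i)
      obtain ⟨g, hg⟩ : ∃ g : ZMod m → V, ∀ i, f i = some (g i) :=
        ⟨fun i => (f i).get (hsome i), fun i => (Option.some_get _).symm⟩
      refine ⟨g, ?_, ?_⟩
      · intro i j h
        apply hf
        rw [hg i, hg j, h]
      · intro i j
        rw [← hadj i j, hg i, hg j, cone_adj_some]
  · -- ClawFree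
    rintro ⟨c, a, b, d, hab, had, hbd, _, _, _, nab, nad, nbd⟩
    have key : ∀ u v : Option V, u ≠ v → ¬ (coneGraph G).Adj u v → ∃ u', u = some u' := by
      intro u v hne hnadj
      match u, v with
      | none, none => exact absurd rfl hne
      | none, some v' => exact absurd (cone_adj_none G v') hnadj
      | some u', _ => exact ⟨u', rfl⟩
    obtain ⟨a', ha⟩ := key a b hab nab
    obtain ⟨b', hb⟩ := key b a (Ne.symm hab) (fun h => nab h.symm)
    obtain ⟨d', hd⟩ := key d a (Ne.symm had) (fun h => nad h.symm)
    subst ha hb hd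
    refine hind ⟨a', b', d', ?_, ?_, ?_, ?_, ?_, ?_⟩
    · exact fun h => hab (by rw [h])
    · exact fun h => had (by rw [h])
    · exact fun h => hbd (by rw [h])
    · exact fun h => nab ((cone_adj_some G a' b').mpr h)
    · exact fun h => nad ((cone_adj_some G a' d').mpr h)
    · exact fun h => nbd ((cone_adj_some G b' d').mpr h)
  · -- Narrow
    intro a b hmax p hp hlen x
    by_cases h1 : (coneGraph G).dist a b ≤ 1
    · exact ⟨a, p.start_mem_support, le_trans (hmax x a) h1⟩
    · push_neg at h1
      have hne : a ≠ b := by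
        rintro rfl
        simp [SimpleGraph.dist_self] at h1
      have hnadj : ¬ (coneGraph G).Adj a b := fun h => absurd (dist_le_one_of_adj h) (by omega)
      have key : ∀ u v : Option V, u ≠ v → ¬ (coneGraph G).Adj u v → ∃ u', u = some u' := by
        intro u v hne hnadj
        match u, v with
        | none, none => exact absurd rfl hne
        | none, some v' => exact absurd (cone_adj_none G v') hnadj
        | some u', _ => exact ⟨u', rfl⟩
      obtain ⟨a', ha⟩ := key a b hne hnadj
      obtain ⟨b', hb⟩ := key b a (Ne.symm hne) (fun h => hnadj h.symm)
      subst ha hb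
      have hG : ¬ G.Adj a' b' := fun h => hnadj ((cone_adj_some G a' b').mpr h)
      match x with
      | none =>
        exact ⟨some a', p.start_mem_support,
          dist_le_one_of_adj (cone_adj_none G a')⟩
      | some x' =>
        have hcases : a' = x' ∨ b' = x' ∨ G.Adj a' x' ∨ G.Adj b' x' := by
          by_contra h
          push_neg at h
          exact hind ⟨a', b', x', fun he => hne (by rw [he]), h.1, h.2.1, hG, h.2.2.1, h.2.2.2⟩
        rcases hcases with h | h | h | h
        · subst h; exact ⟨some a', p.start_mem_support, by simp [SimpleGraph.dist_self]⟩
        · subst h; exact ⟨some b', p.end_mem_support, by simp [SimpleGraph.dist_self]⟩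
        · exact ⟨some a', p.start_mem_support,
            dist_le_one_of_adj ((cone_adj_some G x' a').mpr h.symm)⟩
        · exact ⟨some b', p.end_mem_support,
            dist_le_one_of_adj ((cone_adj_some G x' b').mpr h.symm)⟩
end

section
/- A graph G on [n] is closed with respect to a labeling if and only if for all edges {i,j} and {k,l} with i < j and k < l: if i = k and j ≠ l then {j,l} is an edge, and if j = l and i ≠ k then {i,k} is an edge. -/
/-!
In a closed graph a shortest path never turns: if `u - v - w` lies on a shortest path with
`u` and `w` on the same side of `v`, closedness makes `u` and `w` equal or adjacent, and the
path could be shortened. So a shortest path is monotone, hence increasing when it starts below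
its end. Conversely, if `v` and `w` are non-adjacent neighbours of `u` on the same side of `u`,
then `v - u - w` is a shortest path that is not monotone.
-/

namespace SimpleGraph

variable {V : Type*} [LinearOrder V] {G : SimpleGraph V}

-- `u < v ↔ u < w` says that `v` and `w` lie on the same side of `u`.
variable (G) in
def IsClosedLabeling : Prop :=
  ∀ ⦃u v w : V⦄, G.Adj u v → G.Adj u w → v ≠ w → (u < v ↔ u < w) → G.Adj v w

theorem isClosedLabeling_iff :
    G.IsClosedLabeling ↔ ∀ i j k l : V, G.Adj i j → G.Adj k l → i < j → k < l →
      ((i = k → j ≠ l → G.Adj j l) ∧ (j = l → i ≠ k → G.Adj i k)) := by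
  refine ⟨fun hG i j k l hij hkl hi hk => ⟨?_, ?_⟩, fun h u v w huv huw hvw hside => ?_⟩
  · rintro rfl hjl
    exact hG hij hkl hjl (iff_of_true hi hk)
  · rintro rfl hik
    exact hG hij.symm hkl.symm hik (iff_of_false hi.not_gt hk.not_gt)
  · rcases lt_or_gt_of_ne huv.ne with hlt | hgt
    · exact (h u v u w huv huw hlt (hside.mp hlt)).1 rfl hvw
    · have hwu : w < u := (lt_or_gt_of_ne huw.ne).resolve_left (hgt.not_gt <| hside.mpr ·)
      exact (h v u w u huv.symm huw.symm hgt hwu).2 rfl hvw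

theorem IsClosedLabeling.lt_iff_lt_of_length_eq_dist (hG : G.IsClosedLabeling) {u v w x : V}
    (huv : G.Adj u v) (hvw : G.Adj v w) (q : G.Walk w x)
    (hp : (Walk.cons huv (Walk.cons hvw q)).length = G.dist u x) : u < v ↔ v < w := by
  by_contra hturn
  have hvu : v < u ↔ ¬u < v := ⟨lt_asymm, (lt_or_gt_of_ne huv.ne).resolve_left⟩
  have hside : v < u ↔ v < w := hvu.trans (not_iff.mp hturn)
  simp only [Walk.length_cons] at hp
  by_cases huw : u = w
  · subst huw
    have := dist_le q
    omega
  · have := dist_le (Walk.cons (hG huv.symm hvw huw hside) q)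
    simp only [Walk.length_cons] at this
    omega

theorem IsClosedLabeling.isChain_lt_or_gt_of_length_eq_dist (hG : G.IsClosedLabeling) {u v : V}
    (p : G.Walk u v) (hp : p.length = G.dist u v) :
    p.support.IsChain (· < ·) ∨ p.support.IsChain (· > ·) := by
  induction p with
  | nil => simp
  | @cons u v x huv q ih =>
    have hq := ih (length_eq_dist_of_subwalk hp (q.isSubwalk_cons huv))
    cases q with
    | nil => simpa [List.isChain_pair] using lt_or_gt_of_ne huv.ne
    | cons hvw q =>
      have hturn := hG.lt_iff_lt_of_length_eq_dist huv hvw q hp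
      simp only [Walk.support_cons] at hq ⊢
      rw [← q.cons_tail_support] at hq ⊢
      simp only [List.isChain_cons_cons] at hq ⊢
      rcases hq with ⟨hvw', hq⟩ | ⟨hvw', hq⟩
      · exact .inl ⟨hturn.mpr hvw', hvw', hq⟩
      · have hvu := (lt_or_gt_of_ne huv.ne).resolve_left fun h => lt_asymm hvw' (hturn.mp h)
        exact .inr ⟨hvu, hvw', hq⟩

theorem IsClosedLabeling.isChain_lt_of_length_eq_dist (hG : G.IsClosedLabeling) {u v : V}
    (huv : u < v) (p : G.Walk u v) (hp : p.length = G.dist u v) :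
    p.support.IsChain (· < ·) := by
  refine (hG.isChain_lt_or_gt_of_length_eq_dist p hp).resolve_right fun hdec => ?_
  rw [← p.cons_tail_support, List.isChain_iff_pairwise, List.pairwise_cons] at hdec
  exact lt_asymm huv (hdec.1 v (p.end_mem_tail_support_of_ne huv.ne))

theorem isClosedLabeling_of_forall_isChain_lt (h : ∀ u v : V, u < v → G.Reachable u v →
    ∀ p : G.Walk u v, p.IsPath → p.length = G.dist u v → p.support.IsChain (· < ·)) :
    G.IsClosedLabeling := by
  intro u v w huv huw hvw hside
  by_contra hnadj
  wlog hlt : v < w generalizing v w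
  · exact this huw huv hvw.symm hside.symm (hnadj ·.symm) ((not_lt.mp hlt).lt_of_ne hvw.symm)
  let p : G.Walk v w := .cons huv.symm (.cons huw .nil)
  have hp : p.length = G.dist v w := by
    have h1 : 1 < G.dist v w := p.reachable.one_lt_dist_of_ne_of_not_adj hvw hnadj
    have h2 : G.dist v w ≤ 2 := dist_le p
    change 2 = _
    omega
  have hmono := h v w hlt p.reachable p (p.isPath_of_length_eq_dist hp) hp
  simp only [p, Walk.support_cons, Walk.support_nil, List.isChain_cons_cons,
    List.isChain_singleton, and_true] at hmono
  exact lt_asymm hmono.1 (hside.mpr hmono.2)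

end SimpleGraph

/-- A graph on `[n]` is closed w.r.t. the labeling iff the local condition on pairs of
edges sharing an endpoint is equivalent to every shortest path between comparable
vertices in the same connected component being monotone (strictly increasing). -/
theorem closed_iff_shortest_paths_monotone {n : ℕ} (G : SimpleGraph (Fin n)) :
    (∀ i j k l : Fin n, G.Adj i j → G.Adj k l → i < j → k < l →
      ((i = k → j ≠ l → G.Adj j l) ∧ (j = l → i ≠ k → G.Adj i k)))
    ↔
    (∀ i j : Fin n, i < j → G.Reachable i j →
      ∀ p : G.Walk i j, p.IsPath → p.length = G.dist i j →
        List.Chain' (· < ·) p.support) := by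
  rw [← G.isClosedLabeling_iff]
  exact ⟨fun hG i j hij _ p _ hp => hG.isChain_lt_of_length_eq_dist hij p hp,
    SimpleGraph.isClosedLabeling_of_forall_isChain_lt⟩
end

section
/- If G is a closed graph (with respect to some labeling), then G is claw-free. -/
/-- A closed graph (with respect to some labeling) is claw-free. -/
theorem closed_implies_clawFree {n : ℕ} (G : SimpleGraph (Fin n))
    (hclosed : ∀ i j k l : Fin n, G.Adj i j → G.Adj k l → i < j → k < l →
      ((i = k → j ≠ l → G.Adj j l) ∧ (j = l → i ≠ k → G.Adj i k))) :
    ClawFree G := by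
  rintro ⟨c, a, b, d, hab, had, hbd, hca, hcb, hcd, nab, nad, nbd⟩
  have same : ∀ x y : Fin n, G.Adj c x → G.Adj c y → x ≠ y →
      ((c < x ∧ c < y) ∨ (x < c ∧ y < c)) → G.Adj x y := by
    rintro x y hx hy hxy (⟨h1, h2⟩ | ⟨h1, h2⟩)
    · exact (hclosed c x c y hx hy h1 h2).1 rfl hxy
    · exact (hclosed x c y c hx.symm hy.symm h1 h2).2 rfl hxy
  rcases lt_or_gt_of_ne hca.ne with h1 | h1 <;>
    rcases lt_or_gt_of_ne hcb.ne with h2 | h2 <;>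
      rcases lt_or_gt_of_ne hcd.ne with h3 | h3 <;>
        first
        | exact nab (same a b hca hcb hab (Or.inl ⟨h1, h2⟩))
        | exact nab (same a b hca hcb hab (Or.inr ⟨h1, h2⟩))
        | exact nad (same a d hca hcd had (Or.inl ⟨h1, h3⟩))
        | exact nad (same a d hca hcd had (Or.inr ⟨h1, h3⟩))
        | exact nbd (same b d hcb hcd hbd (Or.inl ⟨h2, h3⟩))
        | exact nbd (same b d hcb hcd hbd (Or.inr ⟨h2, h3⟩))
end

section
/- If G is a simple graph containing an induced 4-cycle, then for any labeling of the vertices, G is not closed. -/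
/-- If `G` contains an induced 4-cycle `a b c d`, then no labeling of the vertices
makes `G` closed. -/
theorem induced_four_cycle_not_closed {V : Type*} (G : SimpleGraph V)
    (a b c d : V) (hab : G.Adj a b) (hbc : G.Adj b c) (hcd : G.Adj c d)
    (hda : G.Adj d a) (hac : a ≠ c) (hbd : b ≠ d)
    (hnac : ¬ G.Adj a c) (hnbd : ¬ G.Adj b d) :
    ∀ ℓ : V → ℕ, Function.Injective ℓ →
      ¬ (∀ i j k l : V, G.Adj i j → G.Adj k l → ℓ i < ℓ j → ℓ k < ℓ l →
          ((i = k → j ≠ l → G.Adj j l) ∧ (j = l → i ≠ k → G.Adj i k))) := by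
  intro ℓ hinj h
  have key : ∀ x y z : V, G.Adj x y → G.Adj x z → y ≠ z →
      ℓ x < ℓ y → ℓ x < ℓ z → G.Adj y z := fun x y z hxy hxz hyz h1 h2 =>
    (h x y x z hxy hxz h1 h2).1 rfl hyz
  have ne : ∀ x y : V, x ≠ y → ℓ x ≠ ℓ y := fun x y hxy he => hxy (hinj he)
  rcases lt_or_gt_of_ne (ne a b hab.ne) with h1 | h1
  · rcases lt_or_gt_of_ne (ne a d hda.ne.symm) with h2 | h2
    · exact hnbd (key a b d hab hda.symm hbd h1 h2)
    · -- d < a < b, so d is min so far; compare d and c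
      rcases lt_or_gt_of_ne (ne d c hcd.ne.symm) with h3 | h3
      · exact hnac (key d a c hda hcd.symm hac h2 h3)
      · -- c < d < a < b, c is min
        exact hnbd (key c b d hbc.symm hcd hbd (h3.trans (h2.trans h1)) h3)
  · -- b < a
    rcases lt_or_gt_of_ne (ne b c hbc.ne) with h2 | h2
    · exact hnac (key b a c hab.symm hbc hac h1 h2)
    · -- c < b < a
      rcases lt_or_gt_of_ne (ne c d hcd.ne) with h3 | h3
      · exact hnbd (key c b d hbc.symm hcd hbd h2 h3)
      · -- d < c < b < a
        exact hnac (key d a c hda hcd.symm hac (h3.trans (h2.trans h1)) h3)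
end
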